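/- arXiv:math/0408218 — 2 statements merged into one kernel-verified Lean document; each statement's English description precedes it below -/
import Mathlib

section
/- Let A be an associative unital algebra over ℂ with a comultiplication Δ. If there exists a faithful right integral ψ on A, then the linear map T₁ : A ⊗ A → A ⊗ A determined by T₁(a ⊗ b) = Δ(a)(1 ⊗ b) is injective. -/
open TensorProduct

noncomputable section

variable {A : Type*} [Ring A] [Algebra ℂ A]

/-- The slice map `id ⊗ ω : A ⊗ A → A`. -/
def sliceR (ω : A →ₗ[ℂ] ℂ) : A ⊗[ℂ] A →ₗ[ℂ] A :=
  (TensorProduct.rid ℂ A).toLinearMap ∘ₗ TensorProduct.map LinearMap.id ω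

/-- The slice map `ω ⊗ id : A ⊗ A → A`. -/
def sliceL (ω : A →ₗ[ℂ] ℂ) : A ⊗[ℂ] A →ₗ[ℂ] A :=
  (TensorProduct.lid ℂ A).toLinearMap ∘ₗ TensorProduct.map ω LinearMap.id

/-- Coassociativity of a comultiplication `Δ : A → A ⊗ A`:
`(Δ ⊗ id) ∘ Δ = (id ⊗ Δ) ∘ Δ` (up to the associator). -/
def IsCoassoc (Δ : A →ₐ[ℂ] A ⊗[ℂ] A) : Prop :=
  ∀ a : A,
    TensorProduct.assoc ℂ A A A (TensorProduct.map Δ.toLinearMap LinearMap.id (Δ a)) =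
      TensorProduct.map LinearMap.id Δ.toLinearMap (Δ a)

/-- A left integral: a nonzero functional with `(id ⊗ φ)(Δ a) = φ(a)·1` for all `a`. -/
def IsLeftIntegral (Δ : A →ₐ[ℂ] A ⊗[ℂ] A) (φ : A →ₗ[ℂ] ℂ) : Prop :=
  φ ≠ 0 ∧ ∀ a : A, sliceR φ (Δ a) = φ a • (1 : A)

/-- A right integral: a nonzero functional with `(ψ ⊗ id)(Δ a) = ψ(a)·1` for all `a`. -/
def IsRightIntegral (Δ : A →ₐ[ℂ] A ⊗[ℂ] A) (ψ : A →ₗ[ℂ] ℂ) : Prop :=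
  ψ ≠ 0 ∧ ∀ a : A, sliceL ψ (Δ a) = ψ a • (1 : A)

/-- A faithful functional: the bilinear form `(a, b) ↦ ω(ab)` is non-degenerate. -/
def IsFaithful (ω : A →ₗ[ℂ] ℂ) : Prop :=
  (∀ b : A, (∀ a : A, ω (a * b) = 0) → b = 0) ∧
  (∀ b : A, (∀ a : A, ω (b * a) = 0) → b = 0)

/-- The left leg of an element `x ∈ A ⊗ A`: the span of `{(id ⊗ ω)(x) : ω ∈ A*}`. -/
def leftLegOf (x : A ⊗[ℂ] A) : Submodule ℂ A :=
  Submodule.span ℂ {y : A | ∃ ω : A →ₗ[ℂ] ℂ, y = sliceR ω x}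

/-- The right leg of an element `x ∈ A ⊗ A`: the span of `{(ω ⊗ id)(x) : ω ∈ A*}`. -/
def rightLegOf (x : A ⊗[ℂ] A) : Submodule ℂ A :=
  Submodule.span ℂ {y : A | ∃ ω : A →ₗ[ℂ] ℂ, y = sliceL ω x}

/-- The left leg of `Δ`: the span of `{(id ⊗ ω)(Δ a) : a ∈ A, ω ∈ A*}`. -/
def leftLeg (Δ : A →ₐ[ℂ] A ⊗[ℂ] A) : Submodule ℂ A :=
  Submodule.span ℂ {y : A | ∃ (a : A) (ω : A →ₗ[ℂ] ℂ), y = sliceR ω (Δ a)}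

/-- The right leg of `Δ`: the span of `{(ω ⊗ id)(Δ a) : a ∈ A, ω ∈ A*}`. -/
def rightLeg (Δ : A →ₐ[ℂ] A ⊗[ℂ] A) : Submodule ℂ A :=
  Submodule.span ℂ {y : A | ∃ (a : A) (ω : A →ₗ[ℂ] ℂ), y = sliceL ω (Δ a)}

/-- A comultiplication is full if both of its legs are all of `A`. -/
def IsFull (Δ : A →ₐ[ℂ] A ⊗[ℂ] A) : Prop :=
  leftLeg Δ = ⊤ ∧ rightLeg Δ = ⊤

/-- The linear map `T₁` with `T₁ (a ⊗ b) = Δ(a) * (1 ⊗ b)`. -/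
def T1 (Δ : A →ₐ[ℂ] A ⊗[ℂ] A) : A ⊗[ℂ] A →ₗ[ℂ] A ⊗[ℂ] A :=
  LinearMap.mul' ℂ (A ⊗[ℂ] A) ∘ₗ
    TensorProduct.map Δ.toLinearMap (TensorProduct.mk ℂ A A 1)

/-- The linear map `T₁'` with `T₁' (a ⊗ b) = Δ(a) * (b ⊗ 1)`. -/
def T1' (Δ : A →ₐ[ℂ] A ⊗[ℂ] A) : A ⊗[ℂ] A →ₗ[ℂ] A ⊗[ℂ] A :=
  LinearMap.mul' ℂ (A ⊗[ℂ] A) ∘ₗ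
    TensorProduct.map Δ.toLinearMap ((TensorProduct.mk ℂ A A).flip 1)

/-- The linear map `T₂` with `T₂ (a ⊗ b) = (a ⊗ 1) * Δ(b)`. -/
def T2 (Δ : A →ₐ[ℂ] A ⊗[ℂ] A) : A ⊗[ℂ] A →ₗ[ℂ] A ⊗[ℂ] A :=
  LinearMap.mul' ℂ (A ⊗[ℂ] A) ∘ₗ
    TensorProduct.map ((TensorProduct.mk ℂ A A).flip 1) Δ.toLinearMap

/-- The linear map `T₂'` with `T₂' (a ⊗ b) = (1 ⊗ a) * Δ(b)`. -/
def T2' (Δ : A →ₐ[ℂ] A ⊗[ℂ] A) : A ⊗[ℂ] A →ₗ[ℂ] A ⊗[ℂ] A :=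
  LinearMap.mul' ℂ (A ⊗[ℂ] A) ∘ₗ
    TensorProduct.map (TensorProduct.mk ℂ A A 1) Δ.toLinearMap

/-- A left cointegral: a nonzero element `h` with `Δ(a)(1 ⊗ h) = a ⊗ h` for all `a`. -/
def IsLeftCointegral (Δ : A →ₐ[ℂ] A ⊗[ℂ] A) (h : A) : Prop :=
  h ≠ 0 ∧ ∀ a : A, Δ a * ((1 : A) ⊗ₜ[ℂ] h) = a ⊗ₜ[ℂ] h

/-- A right cointegral: a nonzero element `k` with `(k ⊗ 1)Δ(a) = k ⊗ a` for all `a`. -/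
def IsRightCointegral (Δ : A →ₐ[ℂ] A ⊗[ℂ] A) (k : A) : Prop :=
  k ≠ 0 ∧ ∀ a : A, (k ⊗ₜ[ℂ] (1 : A)) * Δ a = k ⊗ₜ[ℂ] a

/-- `Δ₁₃(a) = (1 ⊗ σ)(Δ(a) ⊗ 1)`, viewed in `A ⊗ (A ⊗ A)`. -/
def delta13 (Δ : A →ₐ[ℂ] A ⊗[ℂ] A) (a : A) : A ⊗[ℂ] (A ⊗[ℂ] A) :=
  TensorProduct.map LinearMap.id (TensorProduct.comm ℂ A A).toLinearMap
    (TensorProduct.assoc ℂ A A A (Δ a ⊗ₜ[ℂ] (1 : A)))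


/-! Auxiliary lemmas -/

lemma sliceL_tmul (ω : A →ₗ[ℂ] ℂ) (a b : A) : sliceL ω (a ⊗ₜ[ℂ] b) = ω a • b := by
  simp [sliceL]

lemma sliceR_tmul (ω : A →ₗ[ℂ] ℂ) (a b : A) : sliceR ω (a ⊗ₜ[ℂ] b) = ω b • a := by
  simp [sliceR]

lemma slice_exchange (μ ω : A →ₗ[ℂ] ℂ) (x : A ⊗[ℂ] A) :
    ω (sliceL μ x) = μ (sliceR ω x) := by
  induction x using TensorProduct.induction_on with
  | zero => simp
  | tmul a b => simp [sliceL_tmul, sliceR_tmul, mul_comm]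
  | add p q hp hq => simp [map_add, hp, hq]

lemma sliceL_mul_one_tmul (ψ : A →ₗ[ℂ] ℂ) (x : A ⊗[ℂ] A) (b : A) :
    sliceL ψ (x * ((1:A) ⊗ₜ[ℂ] b)) = sliceL ψ x * b := by
  induction x using TensorProduct.induction_on with
  | zero => simp
  | tmul p q => simp [Algebra.TensorProduct.tmul_mul_tmul, sliceL_tmul, smul_mul_assoc]
  | add p q hp hq => simp [add_mul, map_add, hp, hq]

lemma T1_tmul (Δ : A →ₐ[ℂ] A ⊗[ℂ] A) (a b : A) :
    T1 Δ (a ⊗ₜ[ℂ] b) = Δ a * ((1:A) ⊗ₜ[ℂ] b) := by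
  simp [T1, LinearMap.mul'_apply]

/-- If there is a faithful right integral, the map `T₁ : a ⊗ b ↦ Δ(a)(1 ⊗ b)` is injective. -/
theorem T1_injective_of_faithful_right_integral
    (Δ : A →ₐ[ℂ] A ⊗[ℂ] A) (hΔ : IsCoassoc Δ)
    (ψ : A →ₗ[ℂ] ℂ) (hψ : IsRightIntegral Δ ψ) (hψf : IsFaithful ψ) :
    Function.Injective (T1 Δ) := by
  have key : ∀ x : A ⊗[ℂ] A, T1 Δ x = 0 → x = 0 := by
    intro x hx
    have hc : ∀ c : A, sliceL (ψ ∘ₗ LinearMap.mulLeft ℂ c) x = 0 := by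
      intro c
      have hmap : sliceL (ψ ∘ₗ LinearMap.mulLeft ℂ c) =
          sliceL ψ ∘ₗ LinearMap.mulLeft ℂ (Δ c) ∘ₗ T1 Δ := by
        apply TensorProduct.ext'
        intro a b
        simp only [LinearMap.comp_apply, LinearMap.mulLeft_apply, T1_tmul]
        rw [← mul_assoc, ← map_mul, sliceL_mul_one_tmul, hψ.2, sliceL_tmul,
          smul_mul_assoc, one_mul]
        simp
      rw [hmap]
      simp [hx]
    classical
    let 𝒞 := Module.Basis.ofVectorSpace ℂ A
    obtain ⟨b, hb⟩ := TensorProduct.eq_repr_basis_right (𝒞 := 𝒞) (x := x)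
    have hslice : ∀ j, sliceR (𝒞.coord j) x = b j := by
      intro j
      rw [← hb, map_finsuppSum]
      simp only [sliceR_tmul, Module.Basis.coord_apply, Module.Basis.repr_self]
      rw [Finsupp.sum_eq_single j]
      · simp
      · intro i hi hij
        simp [Finsupp.single_apply, hij]
      · simp
    have hbz : ∀ j, b j = 0 := by
      intro j
      apply hψf.1
      intro c
      have := slice_exchange (ψ ∘ₗ LinearMap.mulLeft ℂ c) (𝒞.coord j) x
      rw [hc c, hslice j] at this
      simpa using this.symm
    rw [← hb]
    rw [Finsupp.sum]
    refine Finset.sum_eq_zero fun i _ => ?_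
    rw [hbz i, zero_tmul]
  intro x y hxy
  have : T1 Δ (x - y) = 0 := by rw [map_sub, hxy, sub_self]
  exact sub_eq_zero.mp (key _ this)
end
end

section
/- Let A be a Hopf algebra over ℂ with comultiplication Δ, counit ε and antipode S, and assume S is bijective. Let φ be a left integral on A. Then for all a, b ∈ A: ε((id ⊗ φ)(Δ(a)(1 ⊗ b))) = φ(ab) and S((id ⊗ φ)(Δ(a)(1 ⊗ b))) = (id ⊗ φ)((1 ⊗ a)Δ(b)). -/
open TensorProduct

noncomputable section

variable {A : Type*} [Ring A] [Algebra ℂ A]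

/-- For a Hopf algebra with bijective antipode and a left integral `φ`:
`ε((id ⊗ φ)(Δ(a)(1 ⊗ b))) = φ(ab)` and `S((id ⊗ φ)(Δ(a)(1 ⊗ b))) = (id ⊗ φ)((1 ⊗ a)Δ(b))`. -/
theorem counit_antipode_formulas_with_integral
    (Δ : A →ₐ[ℂ] A ⊗[ℂ] A) (hΔ : IsCoassoc Δ)
    (ε : A →ₗ[ℂ] ℂ) (S : A →ₗ[ℂ] A)
    (hεl : ∀ a : A, sliceL ε (Δ a) = a) (hεr : ∀ a : A, sliceR ε (Δ a) = a)
    (hSl : ∀ a : A,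
      LinearMap.mul' ℂ A (TensorProduct.map S LinearMap.id (Δ a)) = ε a • (1 : A))
    (hSr : ∀ a : A,
      LinearMap.mul' ℂ A (TensorProduct.map LinearMap.id S (Δ a)) = ε a • (1 : A))
    (hSbij : Function.Bijective S)
    (φ : A →ₗ[ℂ] ℂ) (hφ : IsLeftIntegral Δ φ) (a b : A) :
    ε (sliceR φ (Δ a * ((1 : A) ⊗ₜ[ℂ] b))) = φ (a * b) ∧
    S (sliceR φ (Δ a * ((1 : A) ⊗ₜ[ℂ] b))) = sliceR φ (((1 : A) ⊗ₜ[ℂ] a) * Δ b) := by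
  obtain ⟨-, hint⟩ := hφ
  have hslR : ∀ (u v : A), sliceR φ (u ⊗ₜ[ℂ] v) = φ v • u := by
    intro u v; simp [sliceR]
  have hslL : ∀ (u v : A), sliceL ε (u ⊗ₜ[ℂ] v) = ε u • v := by
    intro u v; simp [sliceL]
  set L : A ⊗[ℂ] A →ₗ[ℂ] A := sliceR φ ∘ₗ LinearMap.mulRight ℂ (Δ b) with hLdef
  set K : A ⊗[ℂ] (A ⊗[ℂ] A) →ₗ[ℂ] A := LinearMap.mul' ℂ A ∘ₗ TensorProduct.map S L
    with hKdef
  have hK : ∀ (x : A) (w : A ⊗[ℂ] A), K (x ⊗ₜ[ℂ] w) = S x * L w := by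
    intro x w; simp [hKdef]
  have hLA : ∀ w : A ⊗[ℂ] A, L w = sliceR φ (w * Δ b) := by
    intro w; simp [hLdef]
  have hL : ∀ v : A, L (Δ v) = φ (v * b) • 1 := by
    intro v; rw [hLA, ← map_mul, hint]
  have hleft : ∀ (q : A) (z : A ⊗[ℂ] A),
      sliceR φ ((q ⊗ₜ[ℂ] (1 : A)) * z) = q * sliceR φ z := by
    intro q z
    induction z using TensorProduct.induction_on with
    | zero => simp
    | tmul u v => simp [Algebra.TensorProduct.tmul_mul_tmul, hslR, mul_smul_comm]
    | add s t hs ht => simp [mul_add, hs, ht]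
  have hKb : ∀ x : A ⊗[ℂ] A,
      K (TensorProduct.map LinearMap.id Δ.toLinearMap x) =
        S (sliceR φ (x * ((1 : A) ⊗ₜ[ℂ] b))) := by
    intro x
    induction x using TensorProduct.induction_on with
    | zero => simp
    | tmul u v =>
      simp only [TensorProduct.map_tmul, LinearMap.id_coe, id_eq,
        AlgHom.toLinearMap_apply, hK, hL, Algebra.TensorProduct.tmul_mul_tmul,
        one_mul, mul_one, hslR, map_smul]
      rw [mul_smul_comm, mul_one]
    | add s t hs ht => simp [add_mul, hs, ht]
  have hsub : ∀ (w : A ⊗[ℂ] A) (v : A),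
      K (TensorProduct.assoc ℂ A A A (w ⊗ₜ[ℂ] v)) =
        LinearMap.mul' ℂ A (TensorProduct.map S LinearMap.id w) *
          sliceR φ (((1 : A) ⊗ₜ[ℂ] v) * Δ b) := by
    intro w v
    induction w using TensorProduct.induction_on with
    | zero => rw [TensorProduct.zero_tmul, LinearEquiv.map_zero, map_zero]; simp
    | tmul p q =>
      have h1 : (q ⊗ₜ[ℂ] v) * Δ b = (q ⊗ₜ[ℂ] (1 : A)) * (((1 : A) ⊗ₜ[ℂ] v) * Δ b) := by
        rw [← mul_assoc, Algebra.TensorProduct.tmul_mul_tmul, mul_one, one_mul]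
      rw [show (TensorProduct.assoc ℂ A A A) ((p ⊗ₜ[ℂ] q) ⊗ₜ[ℂ] v) = p ⊗ₜ[ℂ] (q ⊗ₜ[ℂ] v)
        from rfl, hK, hLA, h1, hleft]
      simp [mul_assoc]
    | add s t hs ht => simp [TensorProduct.add_tmul, add_mul, hs, ht]
  have hKa : ∀ x : A ⊗[ℂ] A,
      K (TensorProduct.assoc ℂ A A A (TensorProduct.map Δ.toLinearMap LinearMap.id x)) =
        sliceR φ (((1 : A) ⊗ₜ[ℂ] sliceL ε x) * Δ b) := by
    intro x
    induction x using TensorProduct.induction_on with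
    | zero => rw [map_zero, LinearEquiv.map_zero, map_zero, map_zero]; simp
    | tmul u v =>
      rw [show TensorProduct.map Δ.toLinearMap LinearMap.id (u ⊗ₜ[ℂ] v) =
        (Δ u) ⊗ₜ[ℂ] v from rfl, hsub, hSl, hslL]
      simp [smul_mul_assoc]
    | add s t hs ht =>
      simp only [map_add, hs, ht, TensorProduct.tmul_add, add_mul]
  have hεpart : ∀ x : A ⊗[ℂ] A,
      ε (sliceR φ (x * ((1 : A) ⊗ₜ[ℂ] b))) = φ (sliceL ε x * b) := by
    intro x
    induction x using TensorProduct.induction_on with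
    | zero => simp
    | tmul u v =>
      simp [Algebra.TensorProduct.tmul_mul_tmul, hslR, hslL, smul_mul_assoc,
        smul_eq_mul, mul_comm]
    | add s t hs ht => simp [add_mul, hs, ht]
  refine ⟨?_, ?_⟩
  · rw [hεpart, hεl]
  · rw [← hKb, ← hΔ a, hKa, hεl]
end
end
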